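/- The boundary fusion relation holds: τ(r) K^W₁(z,r) L(z²,r) K^V₂(z) = r(ξz² − 1) K^W(q^{-1}z, q^{-1}r) τ(r) as maps W ⊗ V → W. -/

import Mathlib

/-!
Every operator involved is diagonal or a shift in the basis `w^j`, so the relation is checked on
each `w^j ⊗ v^k`, where it becomes a scalar identity. The eigenvalues `k_j` of `K^W(z,r)` satisfy
`k_{j+1} = q r⁻¹ (z² - q^{-2(j+1)} ξ) k_j`, and those of `K^W(q⁻¹z, q⁻¹r)` are
`k'_{j+1} = r⁻¹ q^{-j} (z² - ξ) k_j`. Writing both sides through `k_j`, the two components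
reduce to `q^{2j} (z² - q^{-2j} ξ) - z² (q^{2j} - 1) = z² - ξ` and
`z² q^{2j+2} (z² - q^{-2j-2} ξ) + 1 - q^{2j+2} z⁴ = 1 - ξ z²`.
-/

noncomputable section

open Finsupp Matrix

/-- The infinite-dimensional space `W = ⊕_{j≥0} ℂ w^j`. -/
abbrev Wsp : Type := ℕ →₀ ℂ

abbrev EndW : Type := Module.End ℂ Wsp

/-- The basis vector `w^j`. -/
def wv (j : ℕ) : Wsp := Finsupp.single j 1

/-- The linear operator on `W` determined by its values on the basis. -/
def mkOp (g : ℕ → Wsp) : EndW :=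
  Finsupp.lsum ℂ fun j => LinearMap.toSpanSingleton ℂ Wsp (g j)

/-- The annihilation operator `a`. -/
def opA : EndW := mkOp fun j => match j with | 0 => 0 | i + 1 => wv i

/-- The creation operator `a†`. -/
def opAdag (q : ℂ) : EndW := mkOp fun j => (1 - q ^ (2 * (j + 1))) • wv (j + 1)

/-- The diagonal operator `f(D)`. -/
def opDiag (f : ℕ → ℂ) : EndW := mkOp fun j => f j • wv j

/-- The L-operator `L(z,r)` on `W ⊗ ℂ²`, written as a 2×2 matrix with entries in `End(W)`. -/
def Lmat (q z r : ℂ) : Matrix (Fin 2) (Fin 2) EndW :=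
  !![1, -(q⁻¹ * z) • opAdag q;
     -(q * z) • opA, opDiag fun j => 1 - q ^ (2 * (j + 1)) * z ^ 2] *
  !![r • opDiag (fun j => q ^ j), 0;
     0, opDiag fun j => (q ^ j)⁻¹]

/-- The infinite-dimensional K-matrix `K^W(z,r)`, acting diagonally on `W` by
`w^j ↦ (q r⁻¹)^j ∏_{i=1}^j (z² - q^{-2i} ξ) w^j`. -/
def KWop (q r ξ z : ℂ) : EndW :=
  opDiag fun j => (q * r⁻¹) ^ j * ∏ i ∈ Finset.range j, (z ^ 2 - (q⁻¹) ^ (2 * (i + 1)) * ξ)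

/-- An operator `X` on `W`, acting in the first factor of `W ⊗ ℂ²`. -/
def d2 (X : EndW) : Matrix (Fin 2) (Fin 2) EndW := !![X, 0; 0, X]

/-- The diagonal K-matrix `K^V(z) = diag(ξz²-1, ξ-z²)`, acting in the second factor of
`W ⊗ ℂ²`. -/
def KVd2 (ξ z : ℂ) : Matrix (Fin 2) (Fin 2) EndW :=
  !![(ξ * z ^ 2 - 1) • 1, 0; 0, (ξ - z ^ 2) • 1]

/-- The components of the fusion intertwiner `ι(r) : W → W ⊗ V`,
`ι(r)(w^j) = (q^{-j-1} - q^{j+1}) w^{j+1} ⊗ v⁰ + q^{j+1} r w^j ⊗ v¹`. -/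
def iotaC (q r : ℂ) : Fin 2 → EndW :=
  ![mkOp fun j => ((q⁻¹) ^ (j + 1) - q ^ (j + 1)) • wv (j + 1),
    opDiag fun j => q ^ (j + 1) * r]

/-- The components of the fusion intertwiner `τ(r) : W ⊗ V → W`,
`τ(r)(w^j ⊗ v⁰) = q^j w^j`, `τ(r)(w^j ⊗ v¹) = (q^{j+1} - q^{-j-1}) r⁻¹ w^{j+1}`. -/
def tauC (q r : ℂ) : Fin 2 → EndW :=
  ![opDiag fun j => q ^ j,
    mkOp fun j => ((q ^ (j + 1) - (q⁻¹) ^ (j + 1)) * r⁻¹) • wv (j + 1)]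

@[simp]
lemma mkOp_wv (g : ℕ → Wsp) (j : ℕ) : mkOp g (wv j) = g j := by
  simp [mkOp, wv]

lemma endW_ext {f g : EndW} (h : ∀ j, f (wv j) = g (wv j)) : f = g :=
  Finsupp.lhom_ext' fun j => LinearMap.ext_ring (h j)

@[simp]
lemma opA_wv_zero : opA (wv 0) = 0 := mkOp_wv _ 0

@[simp]
lemma opA_wv_succ (n : ℕ) : opA (wv (n + 1)) = wv n := mkOp_wv _ (n + 1)

@[simp]
lemma opAdag_wv (q : ℂ) (j : ℕ) : opAdag q (wv j) = (1 - q ^ (2 * (j + 1))) • wv (j + 1) :=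
  mkOp_wv _ j

@[simp]
lemma opDiag_wv (f : ℕ → ℂ) (j : ℕ) : opDiag f (wv j) = f j • wv j := mkOp_wv _ j

@[simp]
lemma tauC_zero_wv (q r : ℂ) (j : ℕ) : tauC q r 0 (wv j) = q ^ j • wv j :=
  opDiag_wv _ j

@[simp]
lemma tauC_one_wv (q r : ℂ) (j : ℕ) :
    tauC q r 1 (wv j) = ((q ^ (j + 1) - (q ^ (j + 1))⁻¹) * r⁻¹) • wv (j + 1) := by
  simp [tauC]

section Lmat

variable (q z r : ℂ)

@[simp]
lemma Lmat_zero_zero_wv (j : ℕ) : Lmat q z r 0 0 (wv j) = (r * q ^ j) • wv j := by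
  simp [Lmat, Matrix.mul_apply, smul_smul]

@[simp]
lemma Lmat_one_zero_wv_zero : Lmat q z r 1 0 (wv 0) = 0 := by
  simp [Lmat, Matrix.mul_apply]

@[simp]
lemma Lmat_one_zero_wv_succ (n : ℕ) :
    Lmat q z r 1 0 (wv (n + 1)) = (-(q * z * r * q ^ (n + 1))) • wv n := by
  simp [Lmat, Matrix.mul_apply, smul_smul, mul_comm r]

@[simp]
lemma Lmat_zero_one_wv (j : ℕ) :
    Lmat q z r 0 1 (wv j) =
      (-(q⁻¹ * z) * ((q ^ j)⁻¹ * (1 - q ^ (2 * (j + 1))))) • wv (j + 1) := by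
  simp [Lmat, Matrix.mul_apply, smul_smul]

@[simp]
lemma Lmat_one_one_wv (j : ℕ) :
    Lmat q z r 1 1 (wv j) = ((q ^ j)⁻¹ * (1 - q ^ (2 * (j + 1)) * z ^ 2)) • wv j := by
  simp [Lmat, Matrix.mul_apply, smul_smul]

end Lmat

lemma vecMul_d2_mul_mul_KVd2 (t : Fin 2 → EndW) (X : EndW) (M : Matrix (Fin 2) (Fin 2) EndW)
    (ξ z : ℂ) (k : Fin 2) :
    vecMul t (d2 X * M * KVd2 ξ z) k =
      ![ξ * z ^ 2 - 1, ξ - z ^ 2] k • (t 0 * (X * M 0 k) + t 1 * (X * M 1 k)) := by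
  fin_cases k <;> simp [d2, KVd2, vecMul, dotProduct, Matrix.mul_apply, Fin.sum_univ_two]

def kwEigenvalue (q r ξ z : ℂ) (j : ℕ) : ℂ :=
  (q * r⁻¹) ^ j * ∏ i ∈ Finset.range j, (z ^ 2 - (q⁻¹) ^ (2 * (i + 1)) * ξ)

@[simp]
lemma KWop_wv (q r ξ z : ℂ) (j : ℕ) :
    KWop q r ξ z (wv j) = kwEigenvalue q r ξ z j • wv j :=
  opDiag_wv _ j

@[simp]
lemma kwEigenvalue_zero (q r ξ z : ℂ) : kwEigenvalue q r ξ z 0 = 1 := by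
  simp [kwEigenvalue]

lemma kwEigenvalue_succ (q r ξ z : ℂ) (j : ℕ) :
    kwEigenvalue q r ξ z (j + 1) =
      q * r⁻¹ * (z ^ 2 - ξ / q ^ (2 * (j + 1))) * kwEigenvalue q r ξ z j := by
  simp only [kwEigenvalue, Finset.prod_range_succ, inv_pow]
  ring

lemma kwEigenvalue_shift_succ {q : ℂ} (hq : q ≠ 0) (r ξ z : ℂ) (j : ℕ) :
    kwEigenvalue q (q⁻¹ * r) ξ (q⁻¹ * z) (j + 1) =
      r⁻¹ * (q ^ j)⁻¹ * (z ^ 2 - ξ) * kwEigenvalue q r ξ z j := by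
  induction j with
  | zero =>
    rw [kwEigenvalue_succ, kwEigenvalue_zero, kwEigenvalue_zero]
    field_simp
    ring
  | succ n ih =>
    rw [kwEigenvalue_succ, ih, kwEigenvalue_succ]
    field_simp
    ring

theorem boundary_fusion_tau_general (q r ξ z : ℂ) (hq0 : q ≠ 0) :
    Matrix.vecMul (tauC q r) (d2 (KWop q r ξ z) * Lmat q (z ^ 2) r * KVd2 ξ z) =
      fun k => (r * (ξ * z ^ 2 - 1)) •
        (KWop q (q⁻¹ * r) ξ (q⁻¹ * z) * tauC q r k) := by
  rw [funext_iff, Fin.forall_fin_two]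
  simp only [vecMul_d2_mul_mul_KVd2, cons_val_zero, cons_val_one, cons_val_fin_one]
  constructor
  · refine endW_ext fun j => ?_
    rcases j with _ | n
    · simp [smul_smul, mul_comm]
    · simp only [LinearMap.smul_apply, LinearMap.add_apply, Module.End.mul_apply, map_smul,
        smul_smul, KWop_wv, tauC_zero_wv, tauC_one_wv, Lmat_zero_zero_wv, Lmat_one_zero_wv_succ]
      rw [kwEigenvalue_succ q r, kwEigenvalue_shift_succ hq0]
      match_scalars
      field_simp
      ring
  · refine endW_ext fun j => ?_
    simp only [LinearMap.smul_apply, LinearMap.add_apply, Module.End.mul_apply, map_smul,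
      smul_smul, KWop_wv, tauC_zero_wv, tauC_one_wv, Lmat_zero_one_wv, Lmat_one_one_wv]
    rw [kwEigenvalue_succ q r, kwEigenvalue_shift_succ hq0]
    match_scalars
    field_simp
    ring

/-- boundary fusion relation
`τ(r) K^W₁(z,r) L(z²,r) K^V₂(z) = r(ξz²-1) K^W(q⁻¹z,q⁻¹r) τ(r)` as maps `W ⊗ V → W`. -/
theorem boundary_fusion_tau (q r ξ z : ℂ) (hq0 : q ≠ 0) (hq1 : q ≠ 1) (hqm1 : q ≠ -1)
    (hr : r ≠ 0) (hξ : ξ ≠ 0) (hz : z ≠ 0) :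
    Matrix.vecMul (tauC q r) (d2 (KWop q r ξ z) * Lmat q (z ^ 2) r * KVd2 ξ z) =
      fun k => (r * (ξ * z ^ 2 - 1)) •
        (KWop q (q⁻¹ * r) ξ (q⁻¹ * z) * tauC q r k) :=
  boundary_fusion_tau_general q r ξ z hq0
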